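/- Under assumption (i) (joint independence of the instrument from all potential outcomes), for every instrument value z ∈ {1,…,K} and all y, ỹ ∈ {0,1}: P(Y(x_0) = y, Y(x_1) = ỹ) ≤ P(Y = y, X = 0 | Z = z) + P(Y = ỹ, X = 1 | Z = z). -/

import Mathlib

open MeasureTheory ProbabilityTheory

/-!
On `{Z = z}` the observed events `{Y = y, X = 0}` and `{Y = ỹ, X = 1}` coincide with the events
`{Y(x₀) = y, X(z) = 0}` and `{Y(x₁) = ỹ, X(z) = 1}` of the potential variables, whose probabilities
are not changed by conditioning on `{Z = z}`, by independence. These two events cover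
`{Y(x₀) = y, Y(x₁) = ỹ}`, according to the value of `X(z)`.
-/

namespace ProbabilityTheory

variable {Ω α β : Type*} [MeasurableSpace Ω] {μ : Measure Ω}

theorem IndepFun.cond_preimage_apply [MeasurableSpace α] [MeasurableSpace β] [IsFiniteMeasure μ]
    {f : Ω → α} {g : Ω → β} (h : IndepFun f g μ) (hf : Measurable f) {s : Set α}
    (hs : MeasurableSet s) (hμs : μ (f ⁻¹' s) ≠ 0) {t : Set β} (ht : MeasurableSet t) :
    μ[g ⁻¹' t | f ⁻¹' s] = μ (g ⁻¹' t) := by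
  rw [cond_apply (hf hs), h.measure_inter_preimage_eq_mul s t hs ht, ← mul_assoc,
    ENNReal.inv_mul_cancel hμs (measure_ne_top μ _), one_mul]

theorem cond_congr_of_forall_mem_iff {s t t' : Set Ω} (hs : MeasurableSet s)
    (h : ∀ ω ∈ s, ω ∈ t ↔ ω ∈ t') : μ[t | s] = μ[t' | s] := by
  rw [← cond_inter_self hs t, ← cond_inter_self hs t']
  congr 1
  ext ω
  exact and_congr_right (h ω)

end ProbabilityTheory

theorem measure_potentialOutcomes_le {Ω : Type*} [MeasurableSpace Ω] (μ : Measure Ω)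
    (D Y0 Y1 : Ω → Fin 2) (y ytilde : Fin 2) :
    μ {ω | Y0 ω = y ∧ Y1 ω = ytilde} ≤
      μ {ω | Y0 ω = y ∧ D ω = 0} + μ {ω | Y1 ω = ytilde ∧ D ω = 1} := by
  refine (measure_mono ?_).trans (measure_union_le _ _)
  rintro ω ⟨h0, h1⟩
  rcases Fin.exists_fin_two.mp ⟨D ω, rfl⟩ with hD | hD
  · exact Or.inl ⟨h0, hD⟩
  · exact Or.inr ⟨h1, hD⟩

theorem stmt1
    {Ω : Type*} [MeasurableSpace Ω] (P : Measure Ω) [IsProbabilityMeasure P]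
    (K : ℕ)
    (Z : Ω → Fin K) (Xz : Fin K → Ω → Fin 2) (Y0 Y1 : Ω → Fin 2)
    (hZ : Measurable Z)
    (X : Ω → Fin 2) (hX : ∀ ω, X ω = Xz (Z ω) ω)
    (Y : Ω → Fin 2) (hY : ∀ ω, Y ω = if X ω = 0 then Y0 ω else Y1 ω)
    (hpos : ∀ z, 0 < P (Z ⁻¹' {z}))
    (hindep : IndepFun Z (fun ω => (Y0 ω, Y1 ω, fun z => Xz z ω)) P) :
    ∀ (z : Fin K) (y ytilde : Fin 2),
      (P {ω | Y0 ω = y ∧ Y1 ω = ytilde}).toReal ≤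
        (P[|Z ⁻¹' {z}] {ω | Y ω = y ∧ X ω = 0}).toReal +
          (P[|Z ⁻¹' {z}] {ω | Y ω = ytilde ∧ X ω = 1}).toReal := by
  intro z y ytilde
  have hz : MeasurableSet (Z ⁻¹' {z}) := hZ (measurableSet_singleton z)
  set W : Ω → Fin 2 × Fin 2 × (Fin K → Fin 2) := fun ω => (Y0 ω, Y1 ω, fun z => Xz z ω)
  have hcond (t : Set (Fin 2 × Fin 2 × (Fin K → Fin 2))) :
      P[W ⁻¹' t | Z ⁻¹' {z}] = P (W ⁻¹' t) :=
    hindep.cond_preimage_apply hZ (measurableSet_singleton z) (hpos z).ne' .of_discrete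
  have h0 :
      P[|Z ⁻¹' {z}] {ω | Y ω = y ∧ X ω = 0} = P {ω | Y0 ω = y ∧ Xz z ω = 0} := by
    refine (cond_congr_of_forall_mem_iff hz fun ω hω => ?_).trans
      (hcond {p | p.1 = y ∧ p.2.2 z = 0})
    change Y ω = y ∧ X ω = 0 ↔ Y0 ω = y ∧ Xz z ω = 0
    rw [hY, hX, hω]
    exact and_congr_left fun hD => by simp [hD]
  have h1 :
      P[|Z ⁻¹' {z}] {ω | Y ω = ytilde ∧ X ω = 1} = P {ω | Y1 ω = ytilde ∧ Xz z ω = 1} := by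
    refine (cond_congr_of_forall_mem_iff hz fun ω hω => ?_).trans
      (hcond {p | p.2.1 = ytilde ∧ p.2.2 z = 1})
    change Y ω = ytilde ∧ X ω = 1 ↔ Y1 ω = ytilde ∧ Xz z ω = 1
    rw [hY, hX, hω]
    exact and_congr_left fun hD => by simp [hD]
  rw [h0, h1]
  exact ENNReal.toReal_le_add (measure_potentialOutcomes_le P (Xz z) Y0 Y1 y ytilde)
    (measure_ne_top P _) (measure_ne_top P _)
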